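/- Let F ∈ k[t]^{n×n} be a row reduced matrix with det F ≠ 0. Then every entry of the inverse matrix F^{−1} ∈ k(t)^{n×n} has degree at most 0 (where the degree of a nonzero rational function g/h is deg g − deg h). In particular, if moreover deg F ≤ d and t^d·F^{−1} has entries in k[t], then deg(t^d·F^{−1}) ≤ d. -/

import Mathlib

/-!
Write `M` for `F` viewed over `k(t)` and `bⱼ` for its rows. Row `i` of `M⁻¹ M = 1` says
`Σⱼ (M⁻¹)ᵢⱼ bⱼ = eᵢ`, a vector of degree `0`, so row reducedness gives
`maxⱼ (deg (M⁻¹)ᵢⱼ + deg bⱼ) = 0`. Since `det F ≠ 0`, every `bⱼ` is a nonzero polynomial row,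
so `deg bⱼ ≥ 0` and hence `deg (M⁻¹)ᵢⱼ ≤ 0`. The second claim follows by comparing degrees in
`t^d (M⁻¹)ᵢⱼ = g`.
-/

open Classical

/-- Degree of a rational function, with `deg 0 = ⊥`. -/
noncomputable def ratDeg {k : Type*} [Field k] (z : RatFunc k) : WithBot ℤ :=
  if z = 0 then ⊥ else (z.intDegree : WithBot ℤ)

/-- Degree of a row vector: the maximum of the degrees of its entries. -/
noncomputable def rowDeg {k : Type*} [Field k] {n : ℕ} (b : Fin n → RatFunc k) : WithBot ℤ :=
  Finset.univ.sup fun j => ratDeg (b j)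

/-- A square matrix over `k(t)` with rows `b₀, …, b_{n-1}` is row reduced if
`deg (Σ λᵢ bᵢ) = maxᵢ deg (λᵢ bᵢ)` for all `λᵢ ∈ k(t)`. -/
def RowReduced {k : Type*} [Field k] {n : ℕ} (M : Matrix (Fin n) (Fin n) (RatFunc k)) : Prop :=
  ∀ c : Fin n → RatFunc k,
    rowDeg (fun j => ∑ i, c i * M i j) = Finset.univ.sup fun i => ratDeg (c i) + rowDeg (M i)

open Polynomial

section

variable {k : Type*} [Field k]

lemma ratDeg_zero : ratDeg (0 : RatFunc k) = ⊥ := if_pos rfl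

lemma ratDeg_of_ne_zero {z : RatFunc k} (hz : z ≠ 0) : ratDeg z = z.intDegree := if_neg hz

lemma ratDeg_one : ratDeg (1 : RatFunc k) = 0 := by
  rw [ratDeg_of_ne_zero (one_ne_zero (α := RatFunc k)), RatFunc.intDegree_one]
  rfl

lemma ratDeg_algebraMap {p : k[X]} (hp : p ≠ 0) :
    ratDeg (algebraMap k[X] (RatFunc k) p) = p.natDegree := by
  rw [ratDeg_of_ne_zero ((map_ne_zero_iff _ (RatFunc.algebraMap_injective k)).mpr hp),
    RatFunc.intDegree_polynomial]
  rfl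

lemma rowDeg_one_row {n : ℕ} (i : Fin n) :
    rowDeg ((1 : Matrix (Fin n) (Fin n) (RatFunc k)) i) = 0 := by
  refine le_antisymm (Finset.sup_le fun j _ => ?_) ?_
  · rcases eq_or_ne i j with rfl | hij
    · simp [ratDeg_one]
    · simp [Matrix.one_apply_ne hij, ratDeg_zero]
  · calc (0 : WithBot ℤ) = ratDeg ((1 : Matrix (Fin n) (Fin n) (RatFunc k)) i i) := by
          rw [Matrix.one_apply_eq, ratDeg_one]
      _ ≤ _ := Finset.le_sup (f := fun j => ratDeg ((1 : Matrix (Fin n) (Fin n) (RatFunc k)) i j))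
        (Finset.mem_univ i)

lemma rowDeg_map_algebraMap_nonneg {n : ℕ} {b : Fin n → k[X]} {j : Fin n} (hj : b j ≠ 0) :
    0 ≤ rowDeg (fun l => algebraMap k[X] (RatFunc k) (b l)) :=
  calc (0 : WithBot ℤ) ≤ (b j).natDegree := by exact_mod_cast (b j).natDegree.cast_nonneg
    _ = ratDeg (algebraMap k[X] (RatFunc k) (b j)) := (ratDeg_algebraMap hj).symm
    _ ≤ _ := Finset.le_sup (f := fun l => ratDeg (algebraMap k[X] (RatFunc k) (b l)))
        (Finset.mem_univ j)

lemma RowReduced.ratDeg_inv_apply_add_rowDeg_le {n : ℕ} {M : Matrix (Fin n) (Fin n) (RatFunc k)}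
    (hM : RowReduced M) (hdet : M.det ≠ 0) (i j : Fin n) :
    ratDeg (M⁻¹ i j) + rowDeg (M j) ≤ 0 := by
  have hrow : (fun l => ∑ m, M⁻¹ i m * M m l) = (1 : Matrix (Fin n) (Fin n) (RatFunc k)) i := by
    rw [← Matrix.nonsing_inv_mul M (isUnit_iff_ne_zero.mpr hdet)]
    rfl
  have hmax := hM (M⁻¹ i)
  rw [hrow, rowDeg_one_row] at hmax
  rw [hmax]
  exact Finset.le_sup (f := fun m => ratDeg (M⁻¹ i m) + rowDeg (M m)) (Finset.mem_univ j)

lemma RowReduced.ratDeg_inv_map_algebraMap_le_zero {n : ℕ} {F : Matrix (Fin n) (Fin n) k[X]}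
    (hF : F.det ≠ 0) (hred : RowReduced (F.map (algebraMap k[X] (RatFunc k)))) (i j : Fin n) :
    ratDeg ((F.map (algebraMap k[X] (RatFunc k)))⁻¹ i j) ≤ 0 := by
  have hdet : (F.map (algebraMap k[X] (RatFunc k))).det ≠ 0 := by
    rw [← RingHom.mapMatrix_apply, ← RingHom.map_det]
    exact (map_ne_zero_iff _ (RatFunc.algebraMap_injective k)).mpr hF
  obtain ⟨l, hl⟩ : ∃ l, F j l ≠ 0 := by
    by_contra! h
    exact hF (Matrix.det_eq_zero_of_row_eq_zero j h)
  exact (le_add_of_nonneg_right (rowDeg_map_algebraMap_nonneg hl)).trans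
    (hred.ratDeg_inv_apply_add_rowDeg_le hdet i j)

lemma natDegree_le_of_X_pow_mul_eq_algebraMap {z : RatFunc k} (hz : ratDeg z ≤ 0) {d : ℕ}
    {g : k[X]} (hg : RatFunc.X ^ d * z = algebraMap k[X] (RatFunc k) g) : g.natDegree ≤ d := by
  rcases eq_or_ne z 0 with rfl | hz0
  · rw [mul_zero, eq_comm, map_eq_zero_iff _ (RatFunc.algebraMap_injective k)] at hg
    simp [hg]
  have hdeg := congrArg RatFunc.intDegree hg
  rw [RatFunc.intDegree_mul (pow_ne_zero _ RatFunc.X_ne_zero) hz0, ← RatFunc.algebraMap_X,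
    ← map_pow, RatFunc.intDegree_polynomial, RatFunc.intDegree_polynomial, natDegree_X_pow] at hdeg
  have hz' : z.intDegree ≤ 0 := by exact_mod_cast (ratDeg_of_ne_zero hz0) ▸ hz
  omega

end

/-- If `F ∈ k[t]^{n×n}` is row reduced with `det F ≠ 0`, then all entries of `F⁻¹` have
degree at most `0`; in particular if `deg F ≤ d` and `t^d·F⁻¹` has polynomial entries then
`deg (t^d·F⁻¹) ≤ d`. -/
theorem stmt_14 {k : Type*} [Field k] {n : ℕ}
    (F : Matrix (Fin n) (Fin n) (Polynomial k)) (hF : F.det ≠ 0)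
    (hred : RowReduced (F.map ⇑(algebraMap (Polynomial k) (RatFunc k)))) :
    (∀ i j : Fin n, ratDeg ((F.map ⇑(algebraMap (Polynomial k) (RatFunc k)))⁻¹ i j) ≤ 0) ∧
    ∀ d : ℕ, (∀ i j : Fin n, (F i j).natDegree ≤ d) →
      ∀ i j : Fin n, ∀ g : Polynomial k,
        (RatFunc.X : RatFunc k) ^ d * (F.map ⇑(algebraMap (Polynomial k) (RatFunc k)))⁻¹ i j =
          algebraMap (Polynomial k) (RatFunc k) g →
        g.natDegree ≤ d :=
  ⟨hred.ratDeg_inv_map_algebraMap_le_zero hF, fun _ _ i j _ hg =>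
    natDegree_le_of_X_pow_mul_eq_algebraMap (hred.ratDeg_inv_map_algebraMap_le_zero hF i j) hg⟩
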